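/- For every standard basis element σ of I^n the atom ⟨σ⟩ is an element of νI^n: each chain ⟨σ⟩_i^α is a nonnegative sum of standard basis elements, ε⟨σ⟩_0^− = ε⟨σ⟩_0^+ = 1, and ⟨σ⟩_i^+ − ⟨σ⟩_i^− = ∂⟨σ⟩_{i+1}^− = ∂⟨σ⟩_{i+1}^+ for all i. -/

import Mathlib

namespace CubicalNerve

/-- Signs: `true` is `+`, `false` is `−`, as an integer `±1`. -/
def sgn (α : Bool) : ℤ := if α then 1 else -1

/-- Sign twisting: `twist α m` is the sign `(−1)^m α`. -/
def twist (α : Bool) (m : ℕ) : Bool := if Even m then α else !α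

/-- A standard basis element of the chain complex `Iⁿ`: the factor at position `i` is
`u₁` when the value is `none`, and `∂^α u₁` when the value is `some α`. -/
abbrev Cell (n : ℕ) := Fin n → Option Bool

/-- The dimension of a standard basis element: the number of `u₁` factors. -/
def Cell.dim {n : ℕ} (σ : Cell n) : ℕ := (Finset.univ.filter fun i => σ i = none).card

/-- The number of `u₁` factors strictly before position `i`. -/
def Cell.below {n : ℕ} (σ : Cell n) (i : Fin n) : ℕ :=
  (Finset.univ.filter fun j => j < i ∧ σ j = none).card

/-- The number of `∂^± u₁` factors at positions `≤ j`. -/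
def Cell.sLe {n : ℕ} (σ : Cell n) (j : Fin n) : ℕ :=
  (Finset.univ.filter fun i => i ≤ j ∧ σ i ≠ none).card

/-- The chain groups of `Iⁿ` (all degrees taken together): the free abelian group
on the standard basis elements. -/
abbrev Chain (n : ℕ) := Cell n →₀ ℤ

/-- The boundary of a standard basis element (tensor-product boundary formula). -/
noncomputable def bdCell {n : ℕ} (σ : Cell n) : Chain n :=
  ∑ i ∈ Finset.univ.filter (fun i => σ i = none),
    ((-1 : ℤ) ^ σ.below i) •
      (Finsupp.single (Function.update σ i (some true)) 1 -
        Finsupp.single (Function.update σ i (some false)) 1)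

/-- The boundary operator of `Iⁿ`. -/
noncomputable def bd {n : ℕ} (c : Chain n) : Chain n := c.sum fun σ z => z • bdCell σ

/-- The positive part of a chain. -/
noncomputable def posPart {n : ℕ} (c : Chain n) : Chain n :=
  Finsupp.mapRange (fun z => max z 0) (by simp) c

/-- The negative part of a chain. -/
noncomputable def negPart {n : ℕ} (c : Chain n) : Chain n :=
  Finsupp.mapRange (fun z => max (-z) 0) (by simp) c

/-- `∂^α`: the positive (resp. negative) part of the boundary. -/
noncomputable def bdp {n : ℕ} (α : Bool) (c : Chain n) : Chain n :=
  if α then posPart (bd c) else negPart (bd c)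

/-- The atom `⟨σ⟩`: `atom σ α q` is the chain `⟨σ⟩_q^α = (∂^α)^{p−q} σ` for `q ≤ p = dim σ`,
and `0` for `q > p`. -/
noncomputable def atom {n : ℕ} (σ : Cell n) (α : Bool) (q : ℕ) : Chain n :=
  if q ≤ σ.dim then (bdp α)^[σ.dim - q] (Finsupp.single σ 1) else 0

/-- The augmentation (extended by zero on positive-degree chains). -/
noncomputable def aug {n : ℕ} (c : Chain n) : ℤ := c.sum fun σ z => if σ.dim = 0 then z else 0

/-- The top basis element `u_n = u₁ ⊗ ⋯ ⊗ u₁` of `Iⁿ`. -/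
def un (n : ℕ) : Cell n := fun _ => none

/-- The basis element `u_{k-1} ⊗ ∂^γ u₁ ⊗ u_{n-k}` (here `k : Fin n` is `k−1` in the
1-indexed notation of the paper). -/
def kcell {n : ℕ} (k : Fin n) (γ : Bool) : Cell n := Function.update (un n) k (some γ)

/-- Membership in `ν Iⁿ` for a double sequence `x`, where `x i α` is `x_i^α`:
each `x_i^α` is an `i`-chain which is a nonnegative sum of standard basis elements,
`ε x_0^- = ε x_0^+ = 1`, and `x_i^+ − x_i^− = ∂ x_{i+1}^- = ∂ x_{i+1}^+`. -/
def IsNu {n : ℕ} (x : ℕ → Bool → Chain n) : Prop :=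
  (∀ i α, ∀ σ ∈ (x i α).support, Cell.dim σ = i) ∧
  (∀ i α, 0 ≤ x i α) ∧
  (∀ α, aug (x 0 α) = 1) ∧
  (∀ i α, x i true - x i false = bd (x (i + 1) α))

/-- The double sequence of an atom. -/
noncomputable def atomSeq {n : ℕ} (σ : Cell n) : ℕ → Bool → Chain n := fun i α => atom σ α i

/-- The identity operation `d_p^α` on double sequences. -/
noncomputable def dOp {n : ℕ} (p : ℕ) (α : Bool) (x : ℕ → Bool → Chain n) : ℕ → Bool → Chain n :=
  fun i β => if i < p then x i β else if i = p then x p α else 0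

/-- The composition `x #_p y = x − d_p⁺ x + y`, formed termwise. -/
noncomputable def comp {n : ℕ} (p : ℕ) (x y : ℕ → Bool → Chain n) : ℕ → Bool → Chain n :=
  fun i β => x i β - dOp p true x i β + y i β

/-- Insertion of a new tensor factor at (0-indexed) position `i` (clamped into range). -/
def insertCell {m : ℕ} (i : ℕ) (v : Option Bool) (σ : Cell m) : Cell (m + 1) :=
  Fin.insertNth ⟨min i m, Nat.lt_succ_of_le (min_le_right i m)⟩ v σ

/-- The face chain map `∂̌_i^α : Iᵐ → Iᵐ⁺¹` (with `i` 1-indexed, `1 ≤ i ≤ m+1`),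
given on standard basis elements by `x ⊗ y ↦ x ⊗ ∂^α u₁ ⊗ y`. -/
noncomputable def faceL (m : ℕ) (i : ℕ) (α : Bool) : Chain m →ₗ[ℤ] Chain (m + 1) :=
  Finsupp.lmapDomain ℤ ℤ (insertCell (i - 1) (some α))

/-- `IsFaceComposite F` means that `F` is a composite of face chain maps `∂̌_i^α`. -/
inductive IsFaceComposite : ∀ {m n : ℕ}, (Chain m →ₗ[ℤ] Chain n) → Prop
  | id (m : ℕ) : IsFaceComposite (LinearMap.id : Chain m →ₗ[ℤ] Chain m)
  | step {m d : ℕ} {F : Chain m →ₗ[ℤ] Chain d} (i : ℕ) (α : Bool)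
      (h1 : 1 ≤ i) (h2 : i ≤ d + 1) :
      IsFaceComposite F → IsFaceComposite ((faceL d i α).comp F)

/-- `stdC m p ι a` is the composite `∂̌_{ι 0}^{a 0} ∘ ⋯ ∘ ∂̌_{ι (p-1)}^{a (p-1)} : Iᵐ → Iᵐ⁺ᵖ`
(so `∂̌_{ι (p-1)}^{a (p-1)}` is applied first). -/
noncomputable def stdC (m : ℕ) :
    (p : ℕ) → (Fin p → ℕ) → (Fin p → Bool) → (Chain m →ₗ[ℤ] Chain (m + p))
  | 0, _, _ => LinearMap.id
  | p + 1, ι, a =>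
      (faceL (m + p) (ι 0) (a 0)).comp (stdC m p (fun r => ι r.succ) (fun r => a r.succ))

/-- Transport of chains along an equality of dimensions. -/
noncomputable def chainCongr {a b : ℕ} (h : a = b) : Chain a ≃ₗ[ℤ] Chain b :=
  Finsupp.domLCongr (Equiv.arrowCongr (finCongr h) (Equiv.refl (Option Bool)))

/-- The basis element of `I¹` with value `v`. -/
def cellOf (v : Option Bool) : Cell 1 := fun _ => v

/-- The `n`-fold tensor product of chains of `I¹`, as a chain of `Iⁿ`. -/
noncomputable def tens {n : ℕ} (c : Fin n → Chain 1) : Chain n :=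
  Finsupp.equivFunOnFinite.symm fun σ => ∏ j, (c j) (cellOf (σ j))

/-- `τ` has an "extreme" standard decomposition of constant sign `ε`: for its `r`-th
factor `∂_{i}^{α}` (`r`, `i` 1-indexed), `(−1)^{i−r} α = ε`. -/
def ExtremeSign {n : ℕ} (τ : Cell n) (ε : ℤ) : Prop :=
  ∀ (j : Fin n) (α : Bool), τ j = some α →
    (-1 : ℤ) ^ ((j : ℕ) + 1 + τ.sLe j) * sgn α = ε

/-- The basis element `τ` corresponds to a precubical operation complementary to
`∂_{k+1}^γ` (with `k : Fin n`, i.e. `k+1` in the paper's 1-indexing): its standard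
decomposition has no factor at position `k`, and inserting `∂_{k+1}^{−γ}` produces
a standard decomposition of constant sign. -/
def CellCompl {n : ℕ} (k : Fin n) (γ : Bool) (τ : Cell n) : Prop :=
  τ k = none ∧ ∃ ε : ℤ, ExtremeSign (Function.update τ k (some (!γ))) ε

/-- The chain homotopy `D` associated to the face `∂_{k+1}^γ` (0-indexed `k : Fin n`). -/
noncomputable def Dfun {n : ℕ} (k : Fin n) (γ : Bool) (c : Chain n) : Chain n :=
  c.sum fun τ z =>
    if τ k = some (!γ) then
      (z * (-((-1 : ℤ) ^ Cell.below τ k * sgn γ))) •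
        Finsupp.single (Function.update τ k (none : Option Bool)) 1
    else 0

/-- The double sequence `A_q^β` of Proposition 6.4. -/
noncomputable def Aseq {n : ℕ} (k : Fin n) (γ : Bool) (q : ℕ) (β : Bool) :
    ℕ → Bool → Chain n :=
  fun i α =>
    if i + 1 < q then atom (un n) α i
    else if i + 1 = q then
      (if α = β then atom (un n) β i
       else atom (un n) β i - bd (Dfun k γ (atom (un n) β i)))
    else if i = q then sgn β • Dfun k γ (atom (un n) β (q - 1))
    else 0

/-- The elements `A_q` of Proposition 6.5, defined inductively from the `A_q^β` by
`A_0 = ⟨σ⟩` and `A_q = A_q^− #_{q−1} A_{q−1} #_{q−1} A_q^+`. -/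
noncomputable def Aq {n : ℕ} (k : Fin n) (γ : Bool) : ℕ → (ℕ → Bool → Chain n)
  | 0 => atomSeq (kcell k γ)
  | q + 1 => comp q (comp q (Aseq k γ (q + 1) false) (Aq k γ q)) (Aseq k γ (q + 1) true)

/-!
The atom has an explicit description: `⟨σ⟩_q^α` is the sum of the `q`-dimensional faces `τ` of
`σ` in which every slot `j` that is free in `σ` and filled in `τ` by `∂^β u₁` has reduced sign
`(−1)^k β = α`, where `k` is the number of `u₁` factors of `τ` before `j`.

For a `q`-face `υ` of `σ`, the coefficient of `υ` in the boundary of the `(q+1)`-dimensional sum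
is the signed number of slots at which the reduced signs of `υ` switch from `α` to `−α`. It is
`1`, `−1` or `0` according as these signs are all `+`, all `−`, or mixed, whatever `α` is. Hence
`∂⟨σ⟩_{q+1}^α = ⟨σ⟩_q^+ − ⟨σ⟩_q^−`, and below the top dimension the two terms have disjoint
supports. This gives both the recursion `∂^α ⟨σ⟩_{q+1}^α = ⟨σ⟩_q^α` identifying the atom with the
explicit sum, and the conditions for membership in `νIⁿ`.
-/

lemma sgn_not (b : Bool) : sgn (!b) = -sgn b := by cases b <;> rfl

lemma twist_succ (β : Bool) (m : ℕ) : twist β (m + 1) = !twist β m := by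
  by_cases h : Even m <;> simp [twist, Nat.even_add_one, h]

lemma sgn_twist (β : Bool) (m : ℕ) : sgn (twist β m) = (-1) ^ m * sgn β := by
  rcases Nat.even_or_odd m with h | h
  · simp [twist, h, h.neg_one_pow]
  · simp [twist, Nat.not_even_iff_odd.mpr h, h.neg_one_pow, sgn_not]

open Finset in
lemma sum_sgn_at_switch {ι : Type*} [LinearOrder ι] (s : Finset ι) (ρ : ι → Option Bool)
    (α : Bool) :
    ∑ i ∈ s, (if (∀ j ∈ s, j < i → ρ j ≠ some !α) ∧ (∀ j ∈ s, i < j → ρ j ≠ some α)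
      then (ρ i).elim 0 sgn else 0)
    = (if ∀ j ∈ s, ρ j ≠ some false then 1 else 0)
      - (if ∀ j ∈ s, ρ j ≠ some true then 1 else 0) := by
  classical
  induction s using Finset.induction_on_max with
  | empty => simp
  | insert m s hlt ih =>
    have hm : m ∉ s := fun h => lt_irrefl m (hlt m h)
    have hrest : ∑ i ∈ s, (if (∀ j ∈ insert m s, j < i → ρ j ≠ some !α) ∧
          (∀ j ∈ insert m s, i < j → ρ j ≠ some α) then (ρ i).elim 0 sgn else 0)
        = if ρ m ≠ some α then ∑ i ∈ s, (if (∀ j ∈ s, j < i → ρ j ≠ some !α) ∧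
          (∀ j ∈ s, i < j → ρ j ≠ some α) then (ρ i).elim 0 sgn else 0) else 0 := by
      split_ifs with h
      · exact sum_congr rfl fun i hi => if_congr (by simp [hlt i hi, (hlt i hi).not_gt, h]) rfl rfl
      · exact sum_eq_zero fun i hi => if_neg (by simp [hlt i hi, h])
    have hm_cond : ((∀ j ∈ insert m s, j < m → ρ j ≠ some !α) ∧
        (∀ j ∈ insert m s, m < j → ρ j ≠ some α)) ↔ ∀ j ∈ s, ρ j ≠ some !α := by
      simp +contextual [hlt, fun j hj => (hlt j hj).not_gt]
    rw [sum_insert hm, hrest, ih, if_congr hm_cond rfl rfl]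
    simp only [forall_mem_insert]
    cases α <;> rcases ρ m with _ | _ | _ <;> simp [sgn] <;> split_ifs <;> simp

namespace Cell

variable {n : ℕ}

def IsFaceOf (τ σ : Cell n) : Prop := ∀ j, σ j ≠ none → τ j = σ j

def reducedSign (τ : Cell n) (j : Fin n) : Option Bool := (τ j).map (twist · (τ.below j))

lemma below_update_of_le (υ : Cell n) {i j : Fin n} (v : Option Bool) (h : j ≤ i) :
    below (Function.update υ i v) j = υ.below j := by
  unfold below
  congr 1
  refine Finset.filter_congr fun k _ => and_congr_right fun hk => ?_
  rw [Function.update_of_ne (hk.trans_le h).ne]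

lemma below_update_none_of_lt {υ : Cell n} {i j : Fin n} (hi : υ i ≠ none) (h : i < j) :
    below (Function.update υ i none) j = υ.below j + 1 := by
  unfold below
  rw [← Finset.card_insert_of_notMem (a := i) (s := Finset.univ.filter fun k => k < j ∧ υ k = none)
    (by simp [hi])]
  congr 1
  ext k
  by_cases hk : k = i
  · subst hk; simp [h]
  · simp [hk]

lemma dim_update_none {υ : Cell n} {i : Fin n} (hi : υ i ≠ none) :
    dim (Function.update υ i none) = υ.dim + 1 := by
  unfold dim
  rw [← Finset.card_insert_of_notMem (a := i) (s := Finset.univ.filter fun k => υ k = none)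
    (by simp [hi])]
  congr 1
  ext k
  by_cases hk : k = i
  · subst hk; simp
  · simp [hk]

lemma reducedSign_update_none_of_lt (υ : Cell n) {i j : Fin n} (h : j < i) :
    reducedSign (Function.update υ i none) j = υ.reducedSign j := by
  rw [reducedSign, reducedSign, below_update_of_le υ none h.le, Function.update_of_ne h.ne]

lemma reducedSign_update_none_of_gt {υ : Cell n} {i j : Fin n} (hi : υ i ≠ none) (h : i < j) :
    reducedSign (Function.update υ i none) j = (υ.reducedSign j).map not := by
  rw [reducedSign, reducedSign, below_update_none_of_lt hi h, Function.update_of_ne h.ne',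
    Option.map_map]
  exact congrArg (Option.map · (υ j)) (funext fun β => twist_succ β _)

lemma exists_free_of_dim_lt {τ σ : Cell n} (hlt : τ.dim < σ.dim) :
    ∃ j, σ j = none ∧ τ j ≠ none := by
  obtain ⟨j, hσ, hτ⟩ := Finset.exists_mem_notMem_of_card_lt_card hlt
  exact ⟨j, (Finset.mem_filter.mp hσ).2, by simpa using hτ⟩

lemma dim_eq_zero_iff {τ : Cell n} : τ.dim = 0 ↔ ∀ j, τ j ≠ none := by
  simp [dim, Finset.filter_eq_empty_iff]

lemma below_eq_zero_of_dim_eq_zero {τ : Cell n} (h : τ.dim = 0) (j : Fin n) : τ.below j = 0 := by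
  simp only [below, Finset.card_eq_zero, Finset.filter_eq_empty_iff]
  exact fun k _ hk => dim_eq_zero_iff.mp h k hk.2

namespace IsFaceOf

variable {τ σ : Cell n}

lemma free_subset (h : τ.IsFaceOf σ) :
    Finset.univ.filter (fun j => τ j = none) ⊆ Finset.univ.filter (fun j => σ j = none) := by
  intro j
  simp only [Finset.mem_filter, Finset.mem_univ, true_and]
  intro hτ
  by_contra hσ
  exact hσ (hτ ▸ h j hσ).symm

lemma dim_le (h : τ.IsFaceOf σ) : τ.dim ≤ σ.dim := Finset.card_le_card h.free_subset

lemma eq_of_dim_eq (h : τ.IsFaceOf σ) (hdim : τ.dim = σ.dim) : τ = σ := by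
  have hfree := Finset.eq_of_subset_of_card_le h.free_subset hdim.ge
  funext j
  by_cases hσ : σ j = none
  · have : j ∈ Finset.univ.filter (fun j => τ j = none) := hfree ▸ by simpa using hσ
    rw [hσ, (Finset.mem_filter.mp this).2]
  · exact h j hσ

lemma of_update_none {υ : Cell n} {i : Fin n} (h : IsFaceOf (Function.update υ i none) σ) :
    υ.IsFaceOf σ := by
  intro j hj
  have hji : j ≠ i := by
    rintro rfl
    exact hj (by simpa using (h j hj).symm)
  simpa [Function.update_of_ne hji] using h j hj

lemma update_none_iff {υ : Cell n} (h : υ.IsFaceOf σ) (i : Fin n) :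
    IsFaceOf (Function.update υ i none) σ ↔ σ i = none := by
  refine ⟨fun hu => by_contra fun hi => ?_, fun hi j hj => ?_⟩
  · exact hi (by simpa using (hu i hi).symm)
  · have hji : j ≠ i := by rintro rfl; exact hj hi
    rw [Function.update_of_ne hji, h j hj]

end IsFaceOf

end Cell

section Boundary

variable {n : ℕ}

lemma bdCell_apply (τ υ : Cell n) :
    bdCell τ υ = ∑ i, if Function.update υ i none = τ then (υ.reducedSign i).elim 0 sgn else 0 := by
  rw [bdCell, Finset.sum_apply', Finset.sum_filter]
  refine Finset.sum_congr rfl fun i _ => ?_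
  simp only [Finsupp.smul_apply, Finsupp.sub_apply, Finsupp.single_apply, smul_eq_mul]
  by_cases h : Function.update υ i none = τ
  · subst h
    rcases hυ : υ i with _ | β
    · simp [Cell.reducedSign, hυ, Function.update_eq_self_iff]
    · simp only [Cell.reducedSign, hυ, Option.map_some, Option.elim_some, sgn_twist]
      cases β <;> simp [hυ, Function.update_eq_self_iff, Cell.below_update_of_le, sgn]
  · rw [if_neg h]
    by_cases hτ : τ i = none
    · have hne : ∀ b : Bool, Function.update τ i (some b) ≠ υ := by
        rintro b rfl
        exact h (by simp [hτ])
      simp [hτ, hne]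
    · rw [if_neg hτ]

lemma bd_apply (c : Chain n) (υ : Cell n) :
    bd c υ = ∑ i, (υ.reducedSign i).elim 0 sgn * c (Function.update υ i none) := by
  rw [bd, Finsupp.sum_apply, Finsupp.sum_fintype _ _ (by simp)]
  simp only [Finsupp.smul_apply, smul_eq_mul, bdCell_apply, Finset.mul_sum, mul_ite, mul_zero]
  rw [Finset.sum_comm]
  simp [mul_comm]

lemma apply_eq_zero_or_of_disjoint {c d : Chain n} (h : Disjoint c.support d.support)
    (τ : Cell n) : c τ = 0 ∨ d τ = 0 := by
  by_contra! hne
  exact Finset.disjoint_left.mp h (Finsupp.mem_support_iff.mpr hne.1)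
    (Finsupp.mem_support_iff.mpr hne.2)

lemma posPart_sub_of_disjoint {c d : Chain n} (hc : 0 ≤ c) (hd : 0 ≤ d)
    (h : Disjoint c.support d.support) : posPart (c - d) = c := by
  ext τ
  have := hc τ; have := hd τ
  rcases apply_eq_zero_or_of_disjoint h τ with h0 | h0 <;>
    simp [posPart, h0] <;> omega

lemma negPart_sub_of_disjoint {c d : Chain n} (hc : 0 ≤ c) (hd : 0 ≤ d)
    (h : Disjoint c.support d.support) : negPart (c - d) = d := by
  ext τ
  have := hc τ; have := hd τ
  rcases apply_eq_zero_or_of_disjoint h τ with h0 | h0 <;>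
    simp [negPart, h0] <;> omega

end Boundary

section AtomFaces

variable {n : ℕ}

def IsAtomFace (σ : Cell n) (α : Bool) (τ : Cell n) : Prop :=
  τ.IsFaceOf σ ∧ ∀ j, σ j = none → τ.reducedSign j ≠ some !α

open Classical in
noncomputable def atomFaces (σ : Cell n) (α : Bool) (q : ℕ) : Chain n :=
  Finsupp.equivFunOnFinite.symm fun τ => if IsAtomFace σ α τ ∧ τ.dim = q then 1 else 0

open Classical in
lemma atomFaces_apply (σ : Cell n) (α : Bool) (q : ℕ) (τ : Cell n) :
    atomFaces σ α q τ = if IsAtomFace σ α τ ∧ τ.dim = q then 1 else 0 := rfl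

lemma isAtomFace_update_none_iff {σ υ : Cell n} {α : Bool} {i : Fin n} (hυ : υ.IsFaceOf σ)
    (hi : υ i ≠ none) :
    IsAtomFace σ α (Function.update υ i none) ↔ σ i = none ∧
      (∀ j, σ j = none → j < i → υ.reducedSign j ≠ some !α) ∧
      (∀ j, σ j = none → i < j → υ.reducedSign j ≠ some α) := by
  have hflip : ∀ o : Option Bool, o.map not ≠ some !α ↔ o ≠ some α := by
    intro o; cases o <;> simp
  rw [IsAtomFace, hυ.update_none_iff]
  refine and_congr_right fun _ => ⟨fun h => ⟨fun j hj hlt => ?_, fun j hj hlt => ?_⟩, ?_⟩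
  · simpa [Cell.reducedSign_update_none_of_lt υ hlt] using h j hj
  · simpa [Cell.reducedSign_update_none_of_gt hi hlt, hflip] using h j hj
  · rintro ⟨hlt, hgt⟩ j hj
    rcases lt_trichotomy j i with h | rfl | h
    · rw [Cell.reducedSign_update_none_of_lt υ h]; exact hlt j hj h
    · simp [Cell.reducedSign]
    · rw [Cell.reducedSign_update_none_of_gt hi h, hflip]; exact hgt j hj h

lemma bd_atomFaces_apply_of_isFaceOf {σ υ : Cell n} {q : ℕ} (hυ : υ.IsFaceOf σ) (hdim : υ.dim = q)
    (α : Bool) :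
    bd (atomFaces σ α (q + 1)) υ = atomFaces σ true q υ - atomFaces σ false q υ := by
  have hswitch := sum_sgn_at_switch (Finset.univ.filter (σ · = none)) υ.reducedSign α
  simp only [Finset.mem_filter, Finset.mem_univ, true_and] at hswitch
  simp only [atomFaces_apply, IsAtomFace, hυ, hdim, true_and, and_true, Bool.not_true,
    Bool.not_false]
  rw [← hswitch, Finset.sum_filter, bd_apply]
  refine Finset.sum_congr rfl fun i _ => ?_
  by_cases hi : υ i = none
  · simp [Cell.reducedSign, hi]
  rw [atomFaces_apply, Cell.dim_update_none hi, hdim, isAtomFace_update_none_iff hυ hi]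
  by_cases hσi : σ i = none <;> simp [hσi]

lemma bd_atomFaces_apply_eq_zero {σ υ : Cell n} {q : ℕ} (hυ : ¬ (υ.IsFaceOf σ ∧ υ.dim = q))
    (α : Bool) : bd (atomFaces σ α (q + 1)) υ = 0 := by
  rw [bd_apply]
  refine Finset.sum_eq_zero fun i _ => ?_
  by_cases hi : υ i = none
  · simp [Cell.reducedSign, hi]
  rw [atomFaces_apply, if_neg, mul_zero]
  rintro ⟨hface, hdim⟩
  rw [Cell.dim_update_none hi, Nat.add_right_cancel_iff] at hdim
  exact hυ ⟨hface.1.of_update_none, hdim⟩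

theorem bd_atomFaces (σ : Cell n) (α : Bool) (q : ℕ) :
    bd (atomFaces σ α (q + 1)) = atomFaces σ true q - atomFaces σ false q := by
  ext υ
  rw [Finsupp.sub_apply]
  by_cases hυ : υ.IsFaceOf σ ∧ υ.dim = q
  · exact bd_atomFaces_apply_of_isFaceOf hυ.1 hυ.2 α
  · have hzero : ∀ β, atomFaces σ β q υ = 0 := fun β => by
      rw [atomFaces_apply, if_neg fun h => hυ ⟨h.1.1, h.2⟩]
    rw [bd_atomFaces_apply_eq_zero hυ, hzero, hzero, sub_zero]

lemma atomFaces_nonneg (σ : Cell n) (α : Bool) (q : ℕ) : 0 ≤ atomFaces σ α q := fun τ => by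
  rw [atomFaces_apply]; split_ifs <;> simp

lemma dim_of_mem_support_atomFaces {σ τ : Cell n} {α : Bool} {q : ℕ}
    (h : τ ∈ (atomFaces σ α q).support) : τ.dim = q := by
  rw [Finsupp.mem_support_iff, atomFaces_apply] at h
  by_contra hq
  exact h (if_neg fun h' => hq h'.2)

lemma isAtomFace_of_mem_support_atomFaces {σ τ : Cell n} {α : Bool} {q : ℕ}
    (h : τ ∈ (atomFaces σ α q).support) : IsAtomFace σ α τ := by
  rw [Finsupp.mem_support_iff, atomFaces_apply] at h
  by_contra hτ
  exact h (if_neg fun h' => hτ h'.1)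

lemma disjoint_support_atomFaces {σ : Cell n} {q : ℕ} (hq : q < σ.dim) :
    Disjoint (atomFaces σ true q).support (atomFaces σ false q).support := by
  refine Finset.disjoint_left.mpr fun τ htrue hfalse => ?_
  obtain ⟨j, hσj, hτj⟩ := Cell.exists_free_of_dim_lt (dim_of_mem_support_atomFaces htrue ▸ hq)
  obtain ⟨β, hβ⟩ := Option.ne_none_iff_exists'.mp hτj
  have h1 := (isAtomFace_of_mem_support_atomFaces htrue).2 j hσj
  have h2 := (isAtomFace_of_mem_support_atomFaces hfalse).2 j hσj
  cases hb : twist β (τ.below j) <;> simp_all [Cell.reducedSign]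

lemma bdp_atomFaces {σ : Cell n} {q : ℕ} (hq : q < σ.dim) (α : Bool) :
    bdp α (atomFaces σ α (q + 1)) = atomFaces σ α q := by
  have hnonneg := atomFaces_nonneg σ
  rw [bdp, bd_atomFaces]
  cases α
  · exact negPart_sub_of_disjoint (hnonneg _ _) (hnonneg _ _) (disjoint_support_atomFaces hq)
  · exact posPart_sub_of_disjoint (hnonneg _ _) (hnonneg _ _) (disjoint_support_atomFaces hq)

lemma atomFaces_dim_self (σ : Cell n) (α : Bool) : atomFaces σ α σ.dim = Finsupp.single σ 1 := by
  ext τ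
  rw [atomFaces_apply, Finsupp.single_apply]
  by_cases h : τ = σ
  · subst h
    rw [if_pos ⟨⟨fun _ _ => rfl, fun j hj => by simp [Cell.reducedSign, hj]⟩, rfl⟩, if_pos rfl]
  · rw [if_neg fun h' => h (h'.1.1.eq_of_dim_eq h'.2), if_neg (Ne.symm h)]

lemma atomFaces_eq_zero_of_dim_lt {σ : Cell n} {q : ℕ} (hq : σ.dim < q) (α : Bool) :
    atomFaces σ α q = 0 := by
  ext τ
  rw [atomFaces_apply, if_neg fun h => (h.2 ▸ h.1.1.dim_le).not_gt hq, Finsupp.coe_zero,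
    Pi.zero_apply]

lemma iterate_bdp_single (σ : Cell n) (α : Bool) {k : ℕ} (hk : k ≤ σ.dim) :
    (bdp α)^[k] (Finsupp.single σ 1) = atomFaces σ α (σ.dim - k) := by
  induction k with
  | zero => rw [Function.iterate_zero_apply, Nat.sub_zero, atomFaces_dim_self]
  | succ k ih =>
    rw [Function.iterate_succ_apply', ih (by omega), ← bdp_atomFaces (q := σ.dim - (k + 1))
      (by omega), show σ.dim - (k + 1) + 1 = σ.dim - k by omega]

theorem atom_eq_atomFaces (σ : Cell n) (α : Bool) (q : ℕ) : atom σ α q = atomFaces σ α q := by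
  rw [atom]
  split_ifs with hq
  · rw [iterate_bdp_single σ α (Nat.sub_le _ _), Nat.sub_sub_self hq]
  · exact (atomFaces_eq_zero_of_dim_lt (not_le.mp hq) α).symm

lemma isAtomFace_and_dim_eq_zero_iff {σ τ : Cell n} {α : Bool} :
    IsAtomFace σ α τ ∧ τ.dim = 0 ↔ τ = fun j => some ((σ j).getD α) := by
  constructor
  · rintro ⟨⟨hface, hsign⟩, hdim⟩
    funext j
    by_cases hσ : σ j = none
    · obtain ⟨β, hβ⟩ := Option.ne_none_iff_exists'.mp (Cell.dim_eq_zero_iff.mp hdim j)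
      have := hsign j hσ
      cases α <;> cases β <;>
        simp_all [Cell.reducedSign, Cell.below_eq_zero_of_dim_eq_zero hdim, twist]
    · obtain ⟨γ, hγ⟩ := Option.ne_none_iff_exists'.mp hσ
      rw [hface j hσ, hγ, Option.getD_some]
  · rintro rfl
    have hdim : Cell.dim (fun j => some ((σ j).getD α)) = 0 := Cell.dim_eq_zero_iff.mpr (by simp)
    refine ⟨⟨fun j hj => ?_, fun j hj => ?_⟩, hdim⟩
    · obtain ⟨γ, hγ⟩ := Option.ne_none_iff_exists'.mp hj
      simp [hγ]
    · cases α <;> simp [Cell.reducedSign, hj, Cell.below_eq_zero_of_dim_eq_zero hdim, twist]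

lemma atomFaces_zero (σ : Cell n) (α : Bool) :
    atomFaces σ α 0 = Finsupp.single (fun j => some ((σ j).getD α)) 1 := by
  classical
  ext τ
  rw [atomFaces_apply, Finsupp.single_apply]
  exact if_congr (isAtomFace_and_dim_eq_zero_iff.trans eq_comm) rfl rfl

lemma aug_single (τ : Cell n) (z : ℤ) : aug (Finsupp.single τ z) = if τ.dim = 0 then z else 0 :=
  Finsupp.sum_single_index (by simp)

end AtomFaces

/-- for every standard basis element `σ` of `Iⁿ` the atom `⟨σ⟩` is an
element of `ν Iⁿ`: each chain `⟨σ⟩_i^α` is an `i`-chain which is a nonnegative sum of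
standard basis elements, `ε ⟨σ⟩_0^− = ε ⟨σ⟩_0^+ = 1`, and
`⟨σ⟩_i^+ − ⟨σ⟩_i^− = ∂ ⟨σ⟩_{i+1}^− = ∂ ⟨σ⟩_{i+1}^+` for all `i`. -/
theorem atom_mem_nu (n : ℕ) (σ : Cell n) : IsNu (atomSeq σ) := by
  simp only [IsNu, atomSeq, atom_eq_atomFaces]
  refine ⟨fun i α τ hτ => dim_of_mem_support_atomFaces hτ, fun i α => atomFaces_nonneg σ α i,
    fun α => ?_, fun i α => (bd_atomFaces σ α i).symm⟩
  rw [atomFaces_zero, aug_single, if_pos (Cell.dim_eq_zero_iff.mpr (by simp))]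

end CubicalNerve
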